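/- arXiv:math/0701610 — 2 statements merged into one kernel-verified Lean document; each statement's English description precedes it below -/
import Mathlib

section
/- Let p > q ≥ 1 be coprime integers, and suppose that p/q = [a₁,…,aₙ]⁻ and p/(p−q) = [b₁,…,b_m]⁻, with a₁,…,aₙ ≥ 2 and b₁,…,b_m ≥ 2. Then Σᵢ₌₁ⁿ (aᵢ−3) + Σⱼ₌₁ᵐ (bⱼ−3) = −2. -/
open Finset

/-- The intersection form on `ℤⁿ` determined by `eᵢ·eⱼ = -δᵢⱼ` on the standard basis. -/
def dotD {n : ℕ} (x y : Fin n → ℤ) : ℤ := -∑ i, x i * y i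

theorem dotD_comm {n : ℕ} (x y : Fin n → ℤ) : dotD x y = dotD y x := by
  unfold dotD
  congr 1
  exact Finset.sum_congr rfl fun i _ => mul_comm _ _

/-- Conditions (*) for the family `v₁, …, vₙ`. -/
def CondsD {n : ℕ} (v : Fin n → Fin n → ℤ) : Prop :=
  (∀ i, dotD (v i) (v i) ≤ -2) ∧
  (∀ i j : Fin n, Nat.dist i.1 j.1 = 1 →
    dotD (v i) (v j) = 0 ∨ dotD (v i) (v j) = 1) ∧
  (∀ i j : Fin n, 1 < Nat.dist i.1 j.1 → dotD (v i) (v j) = 0)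

/-- Two vectors of `ℤⁿ` are linked if some coordinate is nonzero in both. -/
def LinkedD {n : ℕ} (x y : Fin n → ℤ) : Prop := ∃ i, x i ≠ 0 ∧ y i ≠ 0

/-- Irreducibility of a family: any two members are joined by a chain of
consecutively linked members. -/
def IrreducibleD {n : ℕ} (v : Fin n → Fin n → ℤ) : Prop :=
  ∀ a b : Fin n, Relation.ReflTransGen (fun c d => LinkedD (v c) (v d)) a b

/-- A good subset: irreducible and satisfying (*). -/
def GoodD {n : ℕ} (v : Fin n → Fin n → ℤ) : Prop := IrreducibleD v ∧ CondsD v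

/-- A standard subset: (*) holds and consecutive members pair to `1`. -/
def StandardD {n : ℕ} (v : Fin n → Fin n → ℤ) : Prop :=
  CondsD v ∧ ∀ i j : Fin n, (j : ℕ) = (i : ℕ) + 1 → dotD (v i) (v j) = 1

/-- The invariant `I(S) = ∑ (-vᵢ·vᵢ - 3)`. -/
def ID {n : ℕ} (v : Fin n → Fin n → ℤ) : ℤ := ∑ i, (-dotD (v i) (v i) - 3)

/-- `E^S_i = { j | vⱼ·eᵢ ≠ 0 }`. -/
def ED {n : ℕ} (v : Fin n → Fin n → ℤ) (i : Fin n) : Finset (Fin n) :=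
  Finset.univ.filter fun j => v j i ≠ 0

/-- `Vᵢ = { j | vᵢ·eⱼ ≠ 0 }`. -/
def VD {n : ℕ} (v : Fin n → Fin n → ℤ) (i : Fin n) : Finset (Fin n) :=
  Finset.univ.filter fun j => v i j ≠ 0

/-- `pₖ(S) = #{ i | |E^S_i| = k }`. -/
def pD {n : ℕ} (v : Fin n → Fin n → ℤ) (k : ℕ) : ℕ :=
  (Finset.univ.filter fun i : Fin n => (ED v i).card = k).card

/-- The intersection graph: `vᵢ, vⱼ` are joined iff `vᵢ·vⱼ = 1`. -/
def graphD {n : ℕ} (v : Fin n → Fin n → ℤ) : SimpleGraph (Fin n) where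
  Adj a b := a ≠ b ∧ dotD (v a) (v b) = 1
  symm := ⟨fun a b h => ⟨Ne.symm h.1, by rw [dotD_comm]; exact h.2⟩⟩
  loopless := ⟨fun a h => h.1 rfl⟩

/-- `c(S)`: the number of connected components of the intersection graph. -/
noncomputable def cD {n : ℕ} (v : Fin n → Fin n → ℤ) : ℕ :=
  Nat.card (graphD v).ConnectedComponent

def degSumD {n : ℕ} (v : Fin n → Fin n → ℤ) (j : Fin n) : ℤ :=
  ∑ i ∈ Finset.univ.erase j, dotD (v i) (v j)

def IsolatedD {n : ℕ} (v : Fin n → Fin n → ℤ) (j : Fin n) : Prop := degSumD v j = 0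
def FinalD {n : ℕ} (v : Fin n → Fin n → ℤ) (j : Fin n) : Prop := degSumD v j = 1
def InternalD {n : ℕ} (v : Fin n → Fin n → ℤ) (j : Fin n) : Prop := degSumD v j = 2

/-- `π_{e_h}`: projection orthogonal to `e_h` (kills the `h`-th coordinate). -/
def projD {n : ℕ} (h : Fin n) (x : Fin n → ℤ) : Fin n → ℤ := Function.update x h 0

/-- The family obtained from `v` by replacing `v t` with `π_{e_j}(v t)`, deleting the
member of index `s`, and restricting to the coordinates other than the `i`-th one. -/
def contrGen {n : ℕ} (v : Fin (n + 1) → Fin (n + 1) → ℤ) (s t j i : Fin (n + 1)) :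
    Fin n → Fin n → ℤ :=
  fun k l => Function.update v t (projD j (v t)) (s.succAbove k) (i.succAbove l)

/-- `S ↘ S'` : `w` is obtained from `v` by a contraction (equivalently, `v` is obtained
from `w` by an expansion). -/
def ContractionD {n : ℕ} (v : Fin (n + 1) → Fin (n + 1) → ℤ)
    (w : Fin n → Fin n → ℤ) : Prop :=
  CondsD v ∧ (∀ i j, |v i j| ≤ 1) ∧
  ∃ h s t : Fin (n + 1), s ≠ t ∧ ED v h = {s, t} ∧ dotD (v t) (v t) < -2 ∧
    w = contrGen v s t h h

/-- Bad components: base case is a good subset with a connected component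
`{v_{s-1}, v_s, v_{s+1}}` with squares `(-2, <-2, -2)` and `E_j = {s-1,s,s+1}` for some
`j`; further bad components are obtained by expansions adding a final `(-2)`-vector
attached to the component, preserving the number of connected components. -/
inductive BadC : (n : ℕ) → (Fin n → Fin n → ℤ) → Finset (Fin n) → Prop
  | base {n : ℕ} (v : Fin n → Fin n → ℤ) (p s q : Fin n)
      (hgood : GoodD v)
      (hp : (p : ℕ) + 1 = (s : ℕ)) (hq : (s : ℕ) + 1 = (q : ℕ))
      (hp2 : dotD (v p) (v p) = -2) (hq2 : dotD (v q) (v q) = -2)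
      (hs2 : dotD (v s) (v s) < -2)
      (hps : (graphD v).Adj p s) (hsq : (graphD v).Adj s q)
      (hcomp : ∀ r, r ∉ ({p, s, q} : Finset (Fin n)) →
        ¬ (graphD v).Adj r p ∧ ¬ (graphD v).Adj r s ∧ ¬ (graphD v).Adj r q)
      (hE : ∃ j, ED v j = {p, s, q}) :
      BadC n v {p, s, q}
  | step {n : ℕ} (v : Fin (n + 1) → Fin (n + 1) → ℤ) (w : Fin n → Fin n → ℤ)
      (C : Finset (Fin n)) (h s t : Fin (n + 1))
      (hw : BadC n w C)
      (hconds : CondsD v) (hsmall : ∀ i j, |v i j| ≤ 1)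
      (hst : s ≠ t) (hE : ED v h = {s, t}) (ht : dotD (v t) (v t) < -2)
      (hwdef : w = contrGen v s t h h)
      (hfin : FinalD v s) (hs2 : dotD (v s) (v s) = -2)
      (hadj : dotD (v s) (v t) = 1)
      (htC : ∃ c ∈ C, s.succAbove c = t)
      (hc : cD v = cD w) :
      BadC (n + 1) v (insert s (C.image s.succAbove))

/-- `b(S)`: the number of bad components. -/
noncomputable def bD {n : ℕ} (v : Fin n → Fin n → ℤ) : ℕ :=
  Set.ncard {C : Finset (Fin n) | BadC n v C}

/-- `S` has no bad components. -/
def NoBadD {n : ℕ} (v : Fin n → Fin n → ℤ) : Prop := ∀ C, ¬ BadC n v C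

/-- The string `(a₁, …, aₙ)` of a family, where `aᵢ = -vᵢ·vᵢ`. -/
def aStr {n : ℕ} (v : Fin n → Fin n → ℤ) : List ℤ :=
  List.ofFn fun i => -dotD (v i) (v i)

/-- The negative continued fraction `[a₁, …, aₙ]⁻ = a₁ - 1/(a₂ - 1/(⋯ - 1/aₙ))`. -/
def negCF : List ℚ → ℚ
  | [] => 0
  | [a] => a
  | a :: b :: l => a - 1 / negCF (b :: l)

/-- The two operations on strings from Lemma 7.1:
`(s₁,…,s_k) ↦ (s₁+1, s₂, …, s_k, 2)` and `(s₁,…,s_k) ↦ (2, s₁, …, s_{k-1}, s_k+1)`. -/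
def StepOp (l l' : List ℤ) : Prop :=
  (∃ (s : ℤ) (r : List ℤ), l = s :: r ∧ l' = (s + 1) :: (r ++ [2])) ∨
  (∃ (s : ℤ) (r : List ℤ), l = r ++ [s] ∧ l' = (2 :: r) ++ [s + 1])

/-- Inner part of the string pattern of Lemma 7.1; the input is `[c_j, c_{j-1}, …, c₁]`. -/
def innerR : List ℤ → List ℤ
  | [] => []
  | [c] => (c + 2) :: List.replicate (c + 1).toNat (2 : ℤ)
  | c :: c' :: cs =>
      ((c + 2) :: (innerR (c' :: cs)).reverse) ++ List.replicate (c - 1).toNat (2 : ℤ)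

/-- The string `(c_k+1, 2^[c_{k-1}-1], c_{k-2}+2, …, 2^[c₂-1], c₁+2, 2^[c₁+1], c₂+2, …,
c_{k-1}+2, 2^[c_k-1])`, with `rest = [c_{k-2}, …, c₁]`. -/
def bigP (ck ck1 : ℤ) (rest : List ℤ) : List ℤ :=
  (ck + 1) :: (List.replicate (ck1 - 1).toNat (2 : ℤ) ++ innerR rest ++ [ck1 + 2] ++
    List.replicate (ck - 1).toNat (2 : ℤ))

/-- The string `(c₁+1, 2^[c₁+1])`. -/
def baseP (c : ℤ) : List ℤ := (c + 1) :: List.replicate (c + 1).toNat (2 : ℤ)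

/-! Writing `x = [a]⁻` and `y = [b]⁻`, the hypothesis says `1/x + 1/y = 1`; by symmetry let
`x ≤ y`, so `x ≤ 2`. If `x < 2` then `a = (2, a')` and `y > 2`, so `b = (d, b')` with `d ≥ 3`;
the pair of strings `a'`, `(d - 1, b')` again satisfies `1/[a']⁻ + 1/[d - 1, b']⁻ = 1` and has
the same sum `∑ (aᵢ - 3) + ∑ (bⱼ - 3)`. The recursion stops at `x = y = 2`, i.e.
`a = b = (2)`. -/

@[simp]
theorem negCF_nil : negCF [] = 0 := rfl

/-- The junk value `1 / 0 = 0` makes this hold also for `t = []`. -/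
theorem negCF_cons (c : ℚ) (t : List ℚ) : negCF (c :: t) = c - 1 / negCF t := by
  cases t <;> simp [negCF]

theorem one_lt_negCF {l : List ℚ} (hne : l ≠ []) (hl : ∀ x ∈ l, 2 ≤ x) : 1 < negCF l := by
  induction l with
  | nil => exact absurd rfl hne
  | cons c t ih =>
    have hc := hl c List.mem_cons_self
    rcases eq_or_ne t [] with rfl | ht
    · simp only [negCF]; linarith
    · have ht1 := ih ht fun x hx => hl x (List.mem_cons_of_mem c hx)
      have : 1 / negCF t < 1 := (div_lt_one (by linarith)).2 ht1
      rw [negCF_cons]; linarith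

theorem one_div_negCF_nonneg {l : List ℚ} (hl : ∀ x ∈ l, 2 ≤ x) : 0 ≤ 1 / negCF l := by
  rcases eq_or_ne l [] with rfl | hne
  · simp
  · exact one_div_nonneg.2 (by linarith [one_lt_negCF hne hl])

theorem one_div_negCF_lt_one {l : List ℚ} (hl : ∀ x ∈ l, 2 ≤ x) : 1 / negCF l < 1 := by
  rcases eq_or_ne l [] with rfl | hne
  · simp
  · exact (div_lt_one (by linarith [one_lt_negCF hne hl])).2 (one_lt_negCF hne hl)

theorem negCF_cons_le {c : ℚ} {t : List ℚ} (ht : ∀ x ∈ t, 2 ≤ x) :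
    negCF (c :: t) ≤ c := by
  rw [negCF_cons]; linarith [one_div_negCF_nonneg ht]

theorem sub_one_lt_negCF_cons {c : ℚ} {t : List ℚ} (ht : ∀ x ∈ t, 2 ≤ x) :
    c - 1 < negCF (c :: t) := by
  rw [negCF_cons]; linarith [one_div_negCF_lt_one ht]

theorem one_div_negCF_eq_zero_iff {l : List ℚ} (hl : ∀ x ∈ l, 2 ≤ x) :
    1 / negCF l = 0 ↔ l = [] := by
  refine ⟨fun h => ?_, fun h => by simp [h]⟩
  by_contra hne
  rw [one_div, inv_eq_zero] at h
  linarith [one_lt_negCF hne hl]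

theorem forall_two_le_map_intCast {l : List ℤ} (hl : ∀ x ∈ l, 2 ≤ x) :
    ∀ y ∈ l.map (Int.cast : ℤ → ℚ), 2 ≤ y := by
  intro y hy
  obtain ⟨x, hx, rfl⟩ := List.mem_map.1 hy
  exact_mod_cast hl x hx

theorem exists_eq_two_cons_of_negCF_le_two {l : List ℤ} (hl : ∀ x ∈ l, 2 ≤ x)
    (hne : l ≠ []) (h : negCF (l.map (Int.cast : ℤ → ℚ)) ≤ 2) : ∃ t, l = 2 :: t := by
  obtain ⟨c, t, rfl⟩ := List.exists_cons_of_ne_nil hne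
  obtain ⟨hc, ht⟩ := List.forall_mem_cons.1 hl
  have : (c : ℚ) - 1 < 2 := (sub_one_lt_negCF_cons (forall_two_le_map_intCast ht)).trans_le h
  have : c < 3 := by exact_mod_cast (by linarith : (c : ℚ) < 3)
  obtain rfl : c = 2 := by linarith
  exact ⟨t, rfl⟩

theorem exists_cons_of_two_lt_negCF {l : List ℤ} (hl : ∀ x ∈ l, 2 ≤ x)
    (h : 2 < negCF (l.map (Int.cast : ℤ → ℚ))) : ∃ d t, l = d :: t ∧ 3 ≤ d := by
  obtain _ | ⟨d, t⟩ := l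
  · norm_num at h
  · have : (2 : ℚ) < d :=
      h.trans_le (negCF_cons_le (forall_two_le_map_intCast (List.forall_mem_cons.1 hl).2))
    exact ⟨d, t, rfl, by exact_mod_cast this⟩

theorem eq_singleton_two_of_negCF_eq_two {l : List ℤ} (hl : ∀ x ∈ l, 2 ≤ x)
    (h : negCF (l.map (Int.cast : ℤ → ℚ)) = 2) : l = [2] := by
  obtain ⟨t, rfl⟩ := exists_eq_two_cons_of_negCF_le_two hl (by rintro rfl; norm_num at h) h.le
  rw [List.map_cons, negCF_cons] at h
  have := (one_div_negCF_eq_zero_iff (forall_two_le_map_intCast (List.forall_mem_cons.1 hl).2)).1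
    (by push_cast at h; linarith)
  rw [List.map_eq_nil_iff.1 this]

/-- The relation between `[a]⁻ = p/q` and `[b]⁻ = p/(p - q)`, as `q/p + (p - q)/p = 1`. -/
def NegCFDual (a b : List ℚ) : Prop := 1 / negCF a + 1 / negCF b = 1

namespace NegCFDual

variable {a b : List ℚ}

theorem symm (h : NegCFDual a b) : NegCFDual b a := by
  rw [NegCFDual, add_comm]; exact h

theorem one_lt_left (h : NegCFDual a b) (ha : ∀ x ∈ a, 2 ≤ x) (hb : ∀ x ∈ b, 2 ≤ x) :
    1 < negCF a := by
  rcases eq_or_ne a [] with rfl | hne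
  · rw [NegCFDual, negCF_nil, div_zero, zero_add] at h
    exact absurd h (one_div_negCF_lt_one hb).ne
  · exact one_lt_negCF hne ha

theorem le_two_of_le (h : NegCFDual a b) (ha : 0 < negCF a) (hle : negCF a ≤ negCF b) :
    negCF a ≤ 2 := by
  have := one_div_le_one_div_of_le ha hle
  exact (one_div_le_one_div two_pos ha).1 (by rw [NegCFDual] at h; linarith)

theorem eq_two_of_eq_two (h : NegCFDual a b) (ha : negCF a = 2) : negCF b = 2 := by
  rw [NegCFDual, ha] at h
  have : 1 / negCF b = 1 / 2 := by linarith
  rwa [one_div, one_div, inv_inj] at this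

theorem two_lt_of_lt_two (h : NegCFDual a b) (ha : 1 < negCF a) (ha2 : negCF a < 2) :
    2 < negCF b := by
  have := one_div_lt_one_div_of_lt (by linarith) ha2
  have hb : 0 < 1 / negCF b := by
    rw [NegCFDual] at h; linarith [(div_lt_one (by linarith)).2 ha]
  exact (one_div_lt_one_div (one_div_pos.1 hb) two_pos).1 (by rw [NegCFDual] at h; linarith)

/-- Since `[2, t]⁻ = 2 - 1/[t]⁻` and `[d - 1, s]⁻ = [d, s]⁻ - 1`, this is the identity
`(2 - x) + 1/(y - 1) = 1` for `1/x + 1/y = 1`. -/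
theorem tail_cons_sub_one {t s : List ℚ} {d : ℚ} (h : NegCFDual (2 :: t) (d :: s))
    (hy : 1 < negCF (d :: s)) : NegCFDual t ((d - 1) :: s) := by
  have hds : negCF ((d - 1) :: s) = negCF (d :: s) - 1 := by simp only [negCF_cons]; ring
  rw [NegCFDual, negCF_cons] at h
  rw [NegCFDual, hds]
  generalize 1 / negCF t = u at h ⊢
  generalize negCF (d :: s) = y at h hy ⊢
  have hu : 2 - u ≠ 0 := by
    rintro hu
    rw [hu, div_zero, zero_add, one_div, inv_eq_one] at h
    linarith
  have : y - 1 ≠ 0 := by linarith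
  field_simp at h ⊢
  linear_combination h

end NegCFDual

theorem sum_sub_three_add_sum_sub_three_eq_neg_two {a b : List ℤ}
    (ha : ∀ x ∈ a, 2 ≤ x) (hb : ∀ x ∈ b, 2 ≤ x)
    (h : NegCFDual (a.map (Int.cast : ℤ → ℚ)) (b.map (Int.cast : ℤ → ℚ))) :
    (a.map fun x => x - 3).sum + (b.map fun x => x - 3).sum = -2 := by
  obtain ⟨n, hn⟩ : ∃ n, a.length + b.length = n := ⟨_, rfl⟩
  induction n using Nat.strong_induction_on generalizing a b with | _ n ih =>
  wlog hle : negCF (a.map (Int.cast : ℤ → ℚ)) ≤ negCF (b.map (Int.cast : ℤ → ℚ))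
    generalizing a b
  · rw [add_comm]
    exact this hb ha h.symm (by rwa [add_comm]) (le_of_not_ge hle)
  have h1 := h.one_lt_left (forall_two_le_map_intCast ha) (forall_two_le_map_intCast hb)
  rcases (h.le_two_of_le (by linarith) hle).eq_or_lt with h2 | h2
  · rw [eq_singleton_two_of_negCF_eq_two ha h2,
      eq_singleton_two_of_negCF_eq_two hb (h.eq_two_of_eq_two h2)]
    rfl
  obtain ⟨a', rfl⟩ :=
    exists_eq_two_cons_of_negCF_le_two ha (by rintro rfl; norm_num at h1) h2.le
  obtain ⟨d, b', rfl, hd⟩ := exists_cons_of_two_lt_negCF hb (h.two_lt_of_lt_two h1 h2)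
  have hd' : ∀ x ∈ (d - 1) :: b', 2 ≤ x :=
    List.forall_mem_cons.2 ⟨by omega, (List.forall_mem_cons.1 hb).2⟩
  have hdual : NegCFDual (a'.map (Int.cast : ℤ → ℚ)) (((d - 1) :: b').map Int.cast) := by
    rw [List.map_cons, Int.cast_sub, Int.cast_one]
    exact h.tail_cons_sub_one (h1.trans_le hle)
  have key := ih _ (by simp only [List.length_cons] at hn ⊢; omega)
    (List.forall_mem_cons.1 ha).2 hd' hdual rfl
  simp only [List.map_cons, List.sum_cons] at key ⊢
  linarith

/-- `a.map fun x => (x : ℚ)` elaborates by first coercing `a` to `List ℚ` through the list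
monad, and only then mapping the identity. -/
theorem map_coe_eq_map_intCast (a : List ℤ) :
    (a.map fun x => (x : ℚ)) = a.map (Int.cast : ℤ → ℚ) := by
  simp [List.map_eq_flatMap]

theorem lemma_negsum_general (p q : ℤ) (hq : 1 ≤ q) (hpq : q < p)
    (a b : List ℤ) (ha : ∀ x ∈ a, 2 ≤ x) (hb : ∀ x ∈ b, 2 ≤ x)
    (hA : negCF (a.map fun x => (x : ℚ)) = (p : ℚ) / (q : ℚ))
    (hB : negCF (b.map fun x => (x : ℚ)) = (p : ℚ) / ((p : ℚ) - (q : ℚ))) :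
    (a.map fun x => x - 3).sum + (b.map fun x => x - 3).sum = -2 := by
  have hp : (p : ℚ) ≠ 0 := by exact_mod_cast (by omega : p ≠ 0)
  apply sum_sub_three_add_sum_sub_three_eq_neg_two ha hb
  rw [NegCFDual, ← map_coe_eq_map_intCast, ← map_coe_eq_map_intCast, hA, hB, one_div_div,
    one_div_div, ← add_div, add_sub_cancel, div_self hp]

/-- Lemma 2.7 (`l:negsum`). -/
theorem lemma_negsum (p q : ℤ) (hq : 1 ≤ q) (hpq : q < p) (hcop : IsCoprime p q)
    (a b : List ℤ) (ha : ∀ x ∈ a, 2 ≤ x) (hb : ∀ x ∈ b, 2 ≤ x)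
    (hA : negCF (a.map fun x => (x : ℚ)) = (p : ℚ) / (q : ℚ))
    (hB : negCF (b.map fun x => (x : ℚ)) = (p : ℚ) / ((p : ℚ) - (q : ℚ))) :
    (a.map fun x => x - 3).sum + (b.map fun x => x - 3).sum = -2 :=
  lemma_negsum_general p q hq hpq a b ha hb hA hB
end

section
/- Suppose a₁,…,aₙ ≥ 2 are integers, m and k are coprime integers with 0 < k < m, ε ∈ {+1, −1}, and [a₁,…,aₙ]⁻ = m²/(mk + ε). Then [2, a₁,…,aₙ, aₙ+1]⁻ = (2m−k)²/((2m−k)m + ε) and [a₁+1, a₂,…,aₙ, 2]⁻ = (m+k)²/((m+k)k + ε). -/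
open Finset

/-! The string `[a₁, …, aₙ]` is encoded by `M = ∏ !![aᵢ, -1; 1, 0] ∈ SL₂(ℤ)`. With entries `≥ 2`,
`[a₁, …, aₙ]⁻ = M₀₀ / M₁₀` with `0 < M₁₀ < M₀₀`, and by transposition `-M₀₁` is the denominator of
`[aₙ, …, a₁]⁻`, so `0 ≤ -M₀₁ < M₀₀`. Both fractions `M₀₀ / M₁₀` and `m² / (mk + ε)` are reduced,
so the first column of `M` is `(m², mk + ε)`; `det M = 1` then fixes `M₀₁` modulo `m²`, and the
bound pins the second column down to `(-(m² - mk + ε), k² - mk - ε)`. The two new strings have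
matrices `!![2, -1; 1, 0] * M * !![1, 0; -1, 1]` and `!![1, 1; 0, 1] * M * !![2, -1; 1, 0]`, whose
first columns give the claimed fractions. -/

open Matrix

def negCFMat (x : ℤ) : Matrix (Fin 2) (Fin 2) ℤ := !![x, -1; 1, 0]

def negCFProd (l : List ℤ) : Matrix (Fin 2) (Fin 2) ℤ := (l.map negCFMat).prod

@[simp] lemma negCFProd_nil : negCFProd [] = 1 := rfl

@[simp] lemma negCFProd_cons (x : ℤ) (l : List ℤ) :
    negCFProd (x :: l) = negCFMat x * negCFProd l := rfl

@[simp] lemma negCFProd_append (l₁ l₂ : List ℤ) :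
    negCFProd (l₁ ++ l₂) = negCFProd l₁ * negCFProd l₂ := by
  simp [negCFProd]

lemma negCFMat_add_one (x : ℤ) : negCFMat (x + 1) = !![1, 1; 0, 1] * negCFMat x := by
  simp [negCFMat]

lemma negCFMat_add_one' (x : ℤ) : negCFMat (x + 1) = negCFMat x * !![1, 0; -1, 1] := by
  simp [negCFMat]

lemma det_negCFProd (l : List ℤ) : (negCFProd l).det = 1 := by
  induction l with
  | nil => simp
  | cons x l ih => rw [negCFProd_cons, det_mul, ih]; simp [negCFMat]

lemma negCFProd_reverse (l : List ℤ) :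
    negCFProd l.reverse =
      !![negCFProd l 0 0, -negCFProd l 1 0; -negCFProd l 0 1, negCFProd l 1 1] := by
  induction l with
  | nil => simp [one_fin_two]
  | cons x l ih =>
    rw [List.reverse_cons, negCFProd_append, ih, negCFProd_cons]
    ext i j
    fin_cases i <;> fin_cases j <;> simp [negCFMat, mul_apply, Fin.sum_univ_two] <;> ring

@[simp] lemma negCFProd_cons_zero_zero (x : ℤ) (l : List ℤ) :
    negCFProd (x :: l) 0 0 = x * negCFProd l 0 0 - negCFProd l 1 0 := by
  simp [negCFMat, mul_apply, Fin.sum_univ_two]; ring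

@[simp] lemma negCFProd_cons_one_zero (x : ℤ) (l : List ℤ) :
    negCFProd (x :: l) 1 0 = negCFProd l 0 0 := by
  simp [negCFMat, mul_apply, Fin.sum_univ_two]

lemma negCFProd_one_zero_lt {l : List ℤ} (hl : ∀ x ∈ l, 2 ≤ x) :
    0 ≤ negCFProd l 1 0 ∧ negCFProd l 1 0 < negCFProd l 0 0 := by
  induction l with
  | nil => simp
  | cons x l ih =>
    obtain ⟨h0, hlt⟩ := ih fun y hy => hl y (List.mem_cons_of_mem x hy)
    have hx := hl x List.mem_cons_self
    simp only [negCFProd_cons_zero_zero, negCFProd_cons_one_zero]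
    constructor <;> nlinarith

lemma negCFProd_one_zero_pos {l : List ℤ} (hne : l ≠ []) (hl : ∀ x ∈ l, 2 ≤ x) :
    0 < negCFProd l 1 0 := by
  obtain ⟨x, l, rfl⟩ := List.exists_cons_of_ne_nil hne
  have := negCFProd_one_zero_lt fun y hy => hl y (List.mem_cons_of_mem x hy)
  rw [negCFProd_cons_one_zero]
  linarith

lemma negCFProd_zero_one_bounds {l : List ℤ} (hl : ∀ x ∈ l, 2 ≤ x) :
    0 ≤ -negCFProd l 0 1 ∧ -negCFProd l 0 1 < negCFProd l 0 0 := by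
  simpa [negCFProd_reverse] using
    negCFProd_one_zero_lt (l := l.reverse) fun x hx => hl x (List.mem_reverse.1 hx)

lemma negCF_map_eq_div {l : List ℤ} (hne : l ≠ []) (hl : ∀ x ∈ l, 2 ≤ x) :
    negCF (l.map ((↑) : ℤ → ℚ)) = (negCFProd l 0 0 : ℚ) / negCFProd l 1 0 := by
  induction l with
  | nil => exact absurd rfl hne
  | cons x l ih =>
    rcases l with _ | ⟨y, l⟩
    · simp [negCF]
    have hl' : ∀ z ∈ y :: l, 2 ≤ z := fun z hz => hl z (List.mem_cons_of_mem x hz)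
    have hpos : (0 : ℚ) < negCFProd (y :: l) 0 0 := by
      have := negCFProd_one_zero_lt hl'; exact_mod_cast this.1.trans_lt this.2
    rw [List.map_cons, List.map_cons, negCF, ← List.map_cons, ih (List.cons_ne_nil y l) hl',
      negCFProd_cons_zero_zero x, negCFProd_cons_one_zero x]
    field_simp
    push_cast
    ring

lemma eq_of_mul_sub_mul_eq_one {p q b d b' d' : ℤ} (h : p * d - b * q = 1)
    (h' : p * d' - b' * q = 1) (hb : |b - b'| < p) : b = b' ∧ d = d' := by
  have hcop : IsCoprime p q := ⟨d, -b, by linear_combination h⟩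
  have hdvd : p ∣ (b - b') * q := ⟨d - d', by linear_combination h' - h⟩
  have hb' : b = b' := by
    linarith [Int.eq_zero_of_abs_lt_dvd (hcop.dvd_of_dvd_mul_right hdvd) hb]
  refine ⟨hb', mul_left_cancel₀ ((abs_nonneg _).trans_lt hb).ne' ?_⟩
  subst hb'
  linarith

lemma negCFProd_eq_of_negCF_eq {m k ε : ℤ} (hk : 0 < k) (hkm : k < m) (hε : ε = 1 ∨ ε = -1)
    {l : List ℤ} (hne : l ≠ []) (hl : ∀ x ∈ l, 2 ≤ x)
    (hval : negCF (l.map ((↑) : ℤ → ℚ)) = (m : ℚ) ^ 2 / ((m : ℚ) * k + ε)) :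
    negCFProd l = !![m ^ 2, -(m ^ 2 - m * k + ε); m * k + ε, k ^ 2 - m * k - ε] := by
  set M := negCFProd l
  have hε2 : ε ^ 2 = 1 := by rcases hε with rfl | rfl <;> norm_num
  obtain ⟨hε₀, hε₁⟩ : -1 ≤ ε ∧ ε ≤ 1 := by rcases hε with rfl | rfl <;> norm_num
  have hdet : M 0 0 * M 1 1 - M 0 1 * M 1 0 = 1 := by
    rw [← det_fin_two, det_negCFProd]
  have hcop : IsCoprime (m ^ 2) (m * k + ε) :=
    IsCoprime.pow_left ⟨-(ε * k), ε, by linear_combination hε2⟩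
  obtain ⟨hp, hq⟩ : M 0 0 = m ^ 2 ∧ M 1 0 = m * k + ε := by
    refine Rat.div_int_inj (negCFProd_one_zero_pos hne hl) (by nlinarith)
      (Int.isCoprime_iff_nat_coprime.1 ⟨M 1 1, -M 0 1, by linear_combination hdet⟩)
      (Int.isCoprime_iff_nat_coprime.1 hcop) ?_
    rw [← negCF_map_eq_div hne hl, hval]
    push_cast
    rfl
  have hb := negCFProd_zero_one_bounds hl
  obtain ⟨hb', hd'⟩ := eq_of_mul_sub_mul_eq_one (b' := -(m ^ 2 - m * k + ε))
    (d' := k ^ 2 - m * k - ε) hdet (by rw [hp, hq]; linear_combination hε2)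
    (abs_sub_lt_iff.2 ⟨by nlinarith, by nlinarith⟩)
  rw [eta_fin_two M, hp, hq, hb', hd']

lemma negCFProd_dropLast_append_getLast_add_one {l : List ℤ} (hne : l ≠ []) :
    negCFProd (l.dropLast ++ [l.getLast hne + 1]) = negCFProd l * !![1, 0; -1, 1] := by
  conv_rhs => rw [← List.dropLast_append_getLast hne]
  simp [negCFMat_add_one', mul_assoc]

lemma negCFProd_head_add_one_cons_tail {l : List ℤ} (hne : l ≠ []) :
    negCFProd ((l.head hne + 1) :: l.tail) = !![1, 1; 0, 1] * negCFProd l := by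
  conv_rhs => rw [← List.cons_head_tail hne]
  rw [negCFProd_cons, negCFProd_cons, negCFMat_add_one, mul_assoc]

theorem lemma_fraction_general (m k : ℤ) (hk : 0 < k) (hkm : k < m)
    (ε : ℤ) (hε : ε = 1 ∨ ε = -1)
    (a : List ℤ) (hne : a ≠ []) (ha : ∀ x ∈ a, 2 ≤ x)
    (hA : negCF (a.map fun x => (x : ℚ)) =
      ((m : ℚ)) ^ 2 / ((m : ℚ) * (k : ℚ) + (ε : ℚ))) :
    negCF ((2 :: (a.dropLast ++ [a.getLast hne + 1])).map fun x => (x : ℚ)) =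
      (((2 * m - k : ℤ) : ℚ)) ^ 2 / (((2 * m - k) * m + ε : ℤ) : ℚ) ∧
    negCF (((a.head hne + 1) :: a.tail ++ [2]).map fun x => (x : ℚ)) =
      (((m + k : ℤ) : ℚ)) ^ 2 / (((m + k) * k + ε : ℤ) : ℚ) := by
  -- `l.map fun x => (x : ℚ)` elaborates to `List.map id` of the monadic lift of `l` to `List ℚ`
  have hcast : ∀ l : List ℤ, (l.map fun x => (x : ℚ)) = l.map Int.cast := fun l => by
    simp [List.map_eq_flatMap]
  rw [hcast] at hA
  rw [hcast, hcast]
  have hM := negCFProd_eq_of_negCF_eq hk hkm hε hne ha hA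
  have hlast := ha _ (List.getLast_mem hne)
  have hhead := ha _ (List.head_mem hne)
  constructor
  · have hl : ∀ x ∈ 2 :: (a.dropLast ++ [a.getLast hne + 1]), 2 ≤ x := by
      simp only [List.mem_cons, List.mem_append, List.mem_nil_iff, or_false]
      rintro x (rfl | hx | rfl)
      exacts [le_rfl, ha x (List.dropLast_subset a hx), by linarith]
    rw [negCF_map_eq_div (List.cons_ne_nil _ _) hl, negCFProd_cons,
      negCFProd_dropLast_append_getLast_add_one, hM]
    simp [negCFMat]
    ring
  · have hl : ∀ x ∈ (a.head hne + 1) :: a.tail ++ [2], 2 ≤ x := by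
      simp only [List.mem_cons, List.mem_append, List.mem_nil_iff, or_false]
      rintro x ((rfl | hx) | rfl)
      exacts [by linarith, ha x (List.mem_of_mem_tail hx), le_rfl]
    rw [negCF_map_eq_div (by simp) hl, negCFProd_append,
      negCFProd_head_add_one_cons_tail, hM]
    simp [negCFMat]
    ring

/-- Lemma 9.1 (`l:fraction`). -/
theorem lemma_fraction (m k : ℤ) (hk : 0 < k) (hkm : k < m) (hcop : IsCoprime m k)
    (ε : ℤ) (hε : ε = 1 ∨ ε = -1)
    (a : List ℤ) (hne : a ≠ []) (ha : ∀ x ∈ a, 2 ≤ x)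
    (hA : negCF (a.map fun x => (x : ℚ)) =
      ((m : ℚ)) ^ 2 / ((m : ℚ) * (k : ℚ) + (ε : ℚ))) :
    negCF ((2 :: (a.dropLast ++ [a.getLast hne + 1])).map fun x => (x : ℚ)) =
      (((2 * m - k : ℤ) : ℚ)) ^ 2 / (((2 * m - k) * m + ε : ℤ) : ℚ) ∧
    negCF (((a.head hne + 1) :: a.tail ++ [2]).map fun x => (x : ℚ)) =
      (((m + k : ℤ) : ℚ)) ^ 2 / (((m + k) * k + ε : ℤ) : ℚ) :=
  lemma_fraction_general m k hk hkm ε hε a hne ha hA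
end
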